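/- arXiv:0806.0433 — 9 statements merged into one kernel-verified Lean document; each statement's English description precedes it below -/
import Mathlib

section
/- For n ≥ 2 and S ⊆ {1,...,n}, there exists a permutation σ of {1,...,n} whose circular descent set equals S if and only if 1 ∉ S. -/
/-- `i` (0-based position) is a circular descent position of `σ`. -/
def isCDesB {n : ℕ} (σ : Equiv.Perm (Fin n)) (i : Fin n) : Bool :=
  if h : (i : ℕ) + 1 < n then decide (σ ⟨(i : ℕ) + 1, h⟩ < σ i) else false

/-- The circular descent set of `σ`, as a set of 1-based values in `[2,n]`. -/
def cdesSet (n : ℕ) (σ : Equiv.Perm (Fin n)) : Finset ℕ :=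
  (Finset.univ.filter (fun i => isCDesB σ i = true)).image (fun i => (σ i : ℕ) + 1)

/-- The number of permutations of `[n]` with circular descent set `S`. -/
def cdes (n : ℕ) (S : Finset ℕ) : ℕ :=
  (Finset.univ.filter (fun σ : Equiv.Perm (Fin n) => cdesSet n σ = S)).card

/-!
A descent top `σ i > σ (i + 1)` is never the least value, so `1` is never in the circular descent
set. Conversely, listing a set `T` of nonzero values in decreasing order followed by its complement
in increasing order creates a descent at every element of `T` and nowhere else: the last element
of `T` is followed by `0`, the first entry of the complement.
-/

section DescentTops

variable {α : Type*} [LinearOrder α]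

def descentTops : List α → Finset α
  | a :: b :: l => if b < a then insert a (descentTops (b :: l)) else descentTops (b :: l)
  | _ => ∅

theorem mem_descentTops {l : List α} {x : α} :
    x ∈ descentTops l ↔ ∃ (i : ℕ) (h : i + 1 < l.length), l[i + 1] < l[i] ∧ l[i] = x := by
  fun_induction descentTops l with
  | case1 a b l hba ih =>
    rw [Finset.mem_insert, ih]
    constructor
    · rintro (rfl | ⟨i, h, hlt, rfl⟩)
      · exact ⟨0, by simp, hba, rfl⟩
      · exact ⟨i + 1, by simpa using h, hlt, rfl⟩
    · rintro ⟨_ | i, h, hlt, rfl⟩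
      · exact Or.inl rfl
      · exact Or.inr ⟨i, by simpa using h, hlt, rfl⟩
  | case2 a b l hba ih =>
    rw [ih]
    constructor
    · rintro ⟨i, h, hlt, rfl⟩
      exact ⟨i + 1, by simpa using h, hlt, rfl⟩
    · rintro ⟨_ | i, h, hlt, rfl⟩
      · exact absurd hlt hba
      · exact ⟨i, by simpa using h, hlt, rfl⟩
  | case3 l hl =>
    simp only [Finset.notMem_empty, false_iff, not_exists]
    intro i h
    rcases l with _ | ⟨a, _ | ⟨b, l⟩⟩
    · simp at h
    · simp at h
    · exact absurd rfl (hl a b l)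

theorem exists_lt_of_mem_descentTops {l : List α} {x : α} (hx : x ∈ descentTops l) :
    ∃ y ∈ l, y < x := by
  obtain ⟨i, h, hlt, rfl⟩ := mem_descentTops.1 hx
  exact ⟨_, List.getElem_mem _, hlt⟩

theorem descentTops_eq_empty_of_pairwise_le {l : List α} (hl : l.Pairwise (· ≤ ·)) :
    descentTops l = ∅ := by
  fun_induction descentTops l with
  | case1 a b l hba ih => exact absurd (List.rel_of_pairwise_cons hl List.mem_cons_self) hba.not_ge
  | case2 a b l hba ih => exact ih hl.of_cons
  | case3 l hl => rfl

theorem descentTops_cons_of_lt {a b : α} {l : List α} (hb : b ∈ l.head?) (hba : b < a) :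
    descentTops (a :: l) = insert a (descentTops l) := by
  obtain ⟨c, l, rfl⟩ := List.exists_cons_of_ne_nil (List.ne_nil_of_mem (List.mem_of_mem_head? hb))
  obtain rfl : c = b := by simpa using hb
  exact if_pos hba

theorem descentTops_append {l₁ l₂ : List α} (h₁ : l₁.Pairwise (· > ·))
    (h₂ : l₂.Pairwise (· ≤ ·)) (h : ∀ a ∈ l₁, ∃ b ∈ l₂, b < a) :
    descentTops (l₁ ++ l₂) = l₁.toFinset := by
  induction l₁ with
  | nil => exact descentTops_eq_empty_of_pairwise_le h₂
  | cons a l₁ ih =>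
    rw [List.pairwise_cons] at h₁
    have hnext : ∃ b ∈ (l₁ ++ l₂).head?, b < a := by
      cases l₁ with
      | cons c _ => exact ⟨c, rfl, h₁.1 c List.mem_cons_self⟩
      | nil =>
        obtain ⟨b, hb, hba⟩ := h a List.mem_cons_self
        obtain ⟨c, l, rfl⟩ := List.exists_cons_of_ne_nil (List.ne_nil_of_mem hb)
        refine ⟨c, rfl, lt_of_le_of_lt ?_ hba⟩
        rcases List.mem_cons.1 hb with rfl | hb
        · exact le_rfl
        · exact List.rel_of_pairwise_cons h₂ hb
    obtain ⟨b, hb, hba⟩ := hnext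
    rw [List.cons_append, descentTops_cons_of_lt hb hba, List.toFinset_cons,
      ih h₁.2 fun x hx => h x (List.mem_cons_of_mem a hx)]

end DescentTops

theorem cdesSet_eq_image_descentTops {n : ℕ} (σ : Equiv.Perm (Fin n)) :
    cdesSet n σ = (descentTops (List.ofFn σ)).image fun v : Fin n => (v : ℕ) + 1 := by
  have hdes : ∀ i : Fin n, isCDesB σ i = true ↔ ∃ h : (i : ℕ) + 1 < n, σ ⟨i + 1, h⟩ < σ i := by
    intro i
    unfold isCDesB
    split_ifs with h <;> simp [h]
  ext s
  simp only [cdesSet, Finset.mem_image, Finset.mem_filter, Finset.mem_univ, true_and, hdes,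
    mem_descentTops, List.length_ofFn, List.getElem_ofFn]
  constructor
  · rintro ⟨i, ⟨h, hlt⟩, rfl⟩
    exact ⟨σ i, ⟨i, h, hlt, rfl⟩, rfl⟩
  · rintro ⟨_, ⟨i, h, hlt, rfl⟩, rfl⟩
    exact ⟨⟨i, by omega⟩, ⟨h, hlt⟩, rfl⟩

theorem one_notMem_cdesSet {n : ℕ} (σ : Equiv.Perm (Fin n)) : 1 ∉ cdesSet n σ := by
  rw [cdesSet_eq_image_descentTops, Finset.mem_image]
  rintro ⟨v, hv, hv1⟩
  obtain ⟨y, -, hy⟩ := exists_lt_of_mem_descentTops hv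
  exact (Fin.lt_def.1 hy).ne' (by omega)

theorem exists_perm_ofFn_eq {n : ℕ} {l : List (Fin n)} (hl : l.Nodup) (hmem : ∀ x, x ∈ l) :
    ∃ σ : Equiv.Perm (Fin n), List.ofFn σ = l := by
  let e := hl.getEquivOfForallMemList l hmem
  have hlen : l.length = n := by simpa using Fintype.card_congr e
  refine ⟨(finCongr hlen).symm.trans e, List.ext_getElem (by simp [hlen]) fun i _ _ => ?_⟩
  simp [e]

theorem exists_cdesSet_eq_image {n : ℕ} (T : Finset (Fin n)) (hT : ∀ t ∈ T, (t : ℕ) ≠ 0) :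
    ∃ σ : Equiv.Perm (Fin n), cdesSet n σ = T.image fun v : Fin n => (v : ℕ) + 1 := by
  have hnd : (T.sort (· ≥ ·) ++ Tᶜ.sort).Nodup :=
    (T.sort_nodup _).append (Tᶜ.sort_nodup _) fun x hx hx' => by
      simp only [Finset.mem_sort, Finset.mem_compl] at hx hx'
      exact hx' hx
  obtain ⟨σ, hσ⟩ := exists_perm_ofFn_eq hnd fun x => by
    by_cases hx : x ∈ T <;> simp [hx]
  refine ⟨σ, ?_⟩
  rw [cdesSet_eq_image_descentTops, hσ, descentTops_append T.sortedGT_sort.pairwise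
    (Tᶜ.pairwise_sort _), Finset.sort_toFinset]
  intro t ht
  rw [Finset.mem_sort] at ht
  have hpos : 0 < (t : ℕ) := Nat.pos_of_ne_zero (hT t ht)
  refine ⟨⟨0, by omega⟩, ?_, Fin.lt_def.2 hpos⟩
  rw [Finset.mem_sort, Finset.mem_compl]
  intro h0
  exact hT _ h0 rfl

theorem stmt_0_general (n : ℕ) (S : Finset ℕ) (hS : S ⊆ Finset.Icc 1 n) :
    (∃ σ : Equiv.Perm (Fin n), cdesSet n σ = S) ↔ 1 ∉ S := by
  refine ⟨fun ⟨σ, hσ⟩ => hσ ▸ one_notMem_cdesSet σ, fun h1 => ?_⟩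
  let T : Finset (Fin n) := {v | (v : ℕ) + 1 ∈ S}
  have hST : T.image (fun v : Fin n => (v : ℕ) + 1) = S := by
    ext s
    simp only [T, Finset.mem_image, Finset.mem_filter, Finset.mem_univ, true_and]
    refine ⟨fun ⟨v, hv, hvs⟩ => hvs ▸ hv, fun hs => ?_⟩
    obtain ⟨hs1, hsn⟩ := Finset.mem_Icc.1 (hS hs)
    have hs' : s - 1 + 1 = s := Nat.sub_add_cancel hs1
    exact ⟨⟨s - 1, by omega⟩, hs'.symm ▸ hs, hs'⟩
  rw [← hST]
  exact exists_cdesSet_eq_image T fun t ht h0 => h1 (by simpa [T, h0] using ht)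

theorem stmt_0 (n : ℕ) (hn : 2 ≤ n) (S : Finset ℕ) (hS : S ⊆ Finset.Icc 1 n) :
    (∃ σ : Equiv.Perm (Fin n), cdesSet n σ = S) ↔ 1 ∉ S :=
  stmt_0_general n S hS
end

section
/- For n ≥ 3 and S ⊆ [3,n], the number of permutations of [n] with circular descent set S ∪ {2} equals the number of permutations of [n-1] with circular descent set δ(S) = {s-1 : s ∈ S}. -/
/-! In `Fin n` values are 0-based, so `2 ∈ cdesSet n σ` says that the value `1` is immediately
followed by `0`. Deleting that `0` and lowering all other values by one is then a bijection onto the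
permutations of `Fin (n - 1)`; its inverse raises all values of `τ` by one and inserts `0` right
after the position of `τ⁻¹ 0`. Apart from the pairs `(1, 0)` and `(0, x)`, which become the single
ascent `(0, x - 1)`, adjacent pairs are preserved, so the remaining descent tops are those of `τ`
shifted up by one. -/

open Equiv Finset

lemma mem_cdesSet {n : ℕ} {σ : Perm (Fin n)} {a : ℕ} :
    a ∈ cdesSet n σ ↔
      ∃ i j : Fin n, (j : ℕ) = i + 1 ∧ σ j < σ i ∧ (σ i : ℕ) + 1 = a := by
  simp only [cdesSet, mem_image, mem_filter, mem_univ, true_and]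
  constructor
  · rintro ⟨i, hi, rfl⟩
    unfold isCDesB at hi
    split_ifs at hi with h
    exact ⟨i, ⟨i + 1, h⟩, rfl, of_decide_eq_true hi, rfl⟩
  · rintro ⟨i, ⟨_, h⟩, rfl, hd, rfl⟩
    exact ⟨i, by simpa [isCDesB, h] using hd, rfl⟩

lemma two_le_of_mem_cdesSet {n : ℕ} {σ : Perm (Fin n)} {a : ℕ} (ha : a ∈ cdesSet n σ) :
    2 ≤ a := by
  obtain ⟨i, j, -, hd, rfl⟩ := mem_cdesSet.1 ha
  have : (σ j : ℕ) < σ i := hd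
  omega

lemma Fin.val_succAbove {n : ℕ} (p : Fin (n + 1)) (x : Fin n) :
    (p.succAbove x : ℕ) = if (x : ℕ) < p then (x : ℕ) else (x : ℕ) + 1 := by
  split_ifs with h
  · rw [Fin.succAbove_of_castSucc_lt _ _ h, Fin.val_castSucc]
  · rw [Fin.succAbove_of_le_castSucc _ _ (not_lt.1 h), Fin.val_succ]

lemma Fin.val_succAbove_eq_val_succAbove_add_one_iff {n : ℕ} (p : Fin (n + 1)) (x y : Fin n) :
    (p.succAbove y : ℕ) = p.succAbove x + 1 ↔ (y : ℕ) = x + 1 ∧ (x : ℕ) + 1 ≠ p := by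
  rw [Fin.val_succAbove, Fin.val_succAbove]
  split_ifs <;> omega

lemma Fin.val_eq_val_succAbove_add_one_iff {n : ℕ} (p : Fin (n + 1)) (x : Fin n) :
    (p : ℕ) = p.succAbove x + 1 ↔ (p : ℕ) = x + 1 := by
  rw [Fin.val_succAbove]
  split_ifs <;> omega

namespace Equiv.Perm

def insertZeroAt {n : ℕ} (p : Fin (n + 1)) (τ : Perm (Fin n)) : Perm (Fin (n + 1)) :=
  (finSuccEquiv' p).trans (τ.optionCongr.trans (finSuccEquiv n).symm)

section insertZeroAt

variable {n : ℕ} (p : Fin (n + 1)) (τ : Perm (Fin n))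

@[simp]
lemma insertZeroAt_apply_self : insertZeroAt p τ p = 0 := by
  simp [insertZeroAt]

@[simp]
lemma insertZeroAt_apply_succAbove (j : Fin n) :
    insertZeroAt p τ (p.succAbove j) = (τ j).succ := by
  simp [insertZeroAt]

lemma insertZeroAt_injective : Function.Injective (Function.uncurry (@insertZeroAt n)) := by
  rintro ⟨p, τ⟩ ⟨p', τ'⟩ h
  simp only [Function.uncurry_apply_pair] at h
  obtain rfl : p = p' := by
    by_contra hne
    obtain ⟨j, rfl⟩ := Fin.exists_succAbove_eq (Ne.symm hne)
    have h0 := insertZeroAt_apply_self (p.succAbove j) τ'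
    rw [← h, insertZeroAt_apply_succAbove] at h0
    exact Fin.succ_ne_zero _ h0
  refine Prod.ext rfl (Equiv.ext fun j => Fin.succ_injective _ ?_)
  simpa using DFunLike.congr_fun h (p.succAbove j)

lemma insertZeroAt_bijective : Function.Bijective (Function.uncurry (@insertZeroAt n)) :=
  (Fintype.bijective_iff_injective_and_card _).2
    ⟨insertZeroAt_injective, by simp [Fintype.card_perm, Nat.factorial_succ]⟩

end insertZeroAt

variable {m : ℕ} {τ : Perm (Fin (m + 1))} {q : Fin (m + 1)}

lemma insertZeroAt_succ_apply_castSucc (hq : τ q = 0) : insertZeroAt q.succ τ q.castSucc = 1 := by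
  rw [← Fin.succAbove_succ_self, insertZeroAt_apply_succAbove, hq, Fin.succ_zero_eq_one]

lemma cdesSet_insertZeroAt_succ (hq : τ q = 0) :
    cdesSet (m + 2) (insertZeroAt q.succ τ) = insert 2 ((cdesSet (m + 1) τ).image (· + 1)) := by
  ext a
  simp only [mem_insert, mem_image, mem_cdesSet]
  constructor
  · rintro ⟨i, j, hij, hd, rfl⟩
    obtain rfl | ⟨x, rfl⟩ := Fin.eq_self_or_eq_succAbove q.succ i
    · simp at hd
    obtain rfl | ⟨y, rfl⟩ := Fin.eq_self_or_eq_succAbove q.succ j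
    · left
      obtain rfl : x = q :=
        Fin.ext (by simpa using ((Fin.val_eq_val_succAbove_add_one_iff _ _).1 hij).symm)
      rw [Fin.succAbove_succ_self, insertZeroAt_succ_apply_castSucc hq, Fin.val_one]
    · right
      have ⟨hxy, _⟩ := (Fin.val_succAbove_eq_val_succAbove_add_one_iff _ _ _).1 hij
      exact ⟨_, ⟨x, y, hxy, by simpa using hd, rfl⟩, by simp⟩
  · rintro (rfl | ⟨_, ⟨x, y, hxy, hd, rfl⟩, rfl⟩)
    · refine ⟨q.castSucc, q.succ, rfl, ?_, ?_⟩ <;>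
        simp only [insertZeroAt_succ_apply_castSucc hq, insertZeroAt_apply_self]
      exacts [Fin.zero_lt_one, rfl]
    · have hxq : x ≠ q := by
        rintro rfl
        exact Fin.not_lt_zero _ (hq ▸ hd)
      refine ⟨q.succ.succAbove x, q.succ.succAbove y,
        (Fin.val_succAbove_eq_val_succAbove_add_one_iff _ _ _).2 ⟨hxy, ?_⟩, by simpa using hd,
        by simp⟩
      simpa [Fin.ext_iff] using hxq

lemma eq_succ_inv_zero_of_two_mem_cdesSet {p : Fin (m + 2)}
    (h : 2 ∈ cdesSet (m + 2) (insertZeroAt p τ)) : p = (τ⁻¹ 0).succ := by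
  obtain ⟨i, j, hij, hd, hi⟩ := mem_cdesSet.1 h
  have hi1 : insertZeroAt p τ i = 1 := Fin.ext (by rw [Fin.val_one]; omega)
  obtain rfl : j = p := by
    refine (insertZeroAt p τ).injective (Fin.ext ?_)
    have : (insertZeroAt p τ j : ℕ) < 1 := by simpa [hi1] using hd
    rw [insertZeroAt_apply_self, Fin.val_zero]
    omega
  obtain rfl | ⟨x, rfl⟩ := Fin.eq_self_or_eq_succAbove j i
  · simp at hi1
  have hx : x = τ⁻¹ 0 := by
    rw [insertZeroAt_apply_succAbove, ← Fin.succ_zero_eq_one] at hi1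
    exact eq_inv_iff_eq.2 (Fin.succ_injective _ hi1)
  exact Fin.ext (by simpa [← hx] using (Fin.val_eq_val_succAbove_add_one_iff _ _).1 hij)

end Equiv.Perm

lemma insert_two_image_add_one_eq_iff {A S : Finset ℕ} (hA : ∀ a ∈ A, 2 ≤ a)
    (hS : ∀ s ∈ S, 3 ≤ s) :
    insert 2 (A.image (· + 1)) = insert 2 S ↔ A = S.image (· - 1) := by
  have h2A : 2 ∉ A.image (· + 1) := by
    simp only [mem_image, not_exists, not_and]
    intro a ha
    have := hA a ha
    omega
  have h2S : 2 ∉ S := fun h => absurd (hS 2 h) (by norm_num)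
  constructor
  · intro h
    rw [← (erase_insert h2A).symm.trans ((congrArg (erase · 2) h).trans (erase_insert h2S)),
      image_image]
    simp [Function.comp_def]
  · rintro rfl
    rw [image_image, image_congr (f := (· + 1) ∘ (· - 1)) (g := id)
      fun s hs => Nat.sub_add_cancel (by linarith [hS s hs]), image_id]

theorem stmt_2 (n : ℕ) (hn : 3 ≤ n) (S : Finset ℕ) (hS : S ⊆ Finset.Icc 3 n) :
    cdes n (insert 2 S) = cdes (n - 1) (S.image (fun s => s - 1)) := by
  obtain ⟨m, rfl⟩ : ∃ m, n = m + 2 := ⟨n - 2, by omega⟩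
  have hS3 : ∀ s ∈ S, 3 ≤ s := fun s hs => (mem_Icc.1 (hS hs)).1
  have key (τ : Perm (Fin (m + 1))) :
      cdesSet (m + 2) (Perm.insertZeroAt (τ⁻¹ 0).succ τ) = insert 2 S ↔
        cdesSet (m + 1) τ = S.image (· - 1) := by
    rw [Perm.cdesSet_insertZeroAt_succ (q := τ⁻¹ 0) (apply_symm_apply τ 0),
      insert_two_image_add_one_eq_iff (fun _ => two_le_of_mem_cdesSet) hS3]
  rw [show m + 2 - 1 = m + 1 from rfl]
  symm
  refine card_bij (fun τ _ => Perm.insertZeroAt (τ⁻¹ 0).succ τ) (fun τ hτ => ?_)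
    (fun τ _ τ' _ h => congrArg Prod.snd (@Perm.insertZeroAt_injective _ (_, τ) (_, τ') h))
    (fun σ hσ => ?_)
  · rw [mem_filter_univ] at hτ ⊢
    exact (key τ).2 hτ
  · obtain ⟨⟨p, τ⟩, rfl⟩ := Perm.insertZeroAt_bijective.2 σ
    rw [mem_filter_univ, Function.uncurry_apply_pair] at hσ
    obtain rfl := Perm.eq_succ_inv_zero_of_two_mem_cdesSet (hσ ▸ mem_insert_self 2 S)
    exact ⟨τ, (mem_filter_univ _).2 ((key τ).1 hσ), rfl⟩
end

section
/- Let S ⊆ [2,n] be nonempty with maximum element j. Then for every integer n ≥ j, cdes_n(S) = cdes_j(S). -/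
open Finset

def extendLast {n : ℕ} (τ : Equiv.Perm (Fin n)) : Equiv.Perm (Fin (n + 1)) :=
  finSuccEquivLast.symm.permCongr τ.optionCongr

@[simp]
lemma extendLast_castSucc {n : ℕ} (τ : Equiv.Perm (Fin n)) (i : Fin n) :
    extendLast τ i.castSucc = (τ i).castSucc := by
  simp [extendLast, Equiv.permCongr_apply]

@[simp]
lemma extendLast_last {n : ℕ} (τ : Equiv.Perm (Fin n)) :
    extendLast τ (Fin.last n) = Fin.last n := by
  simp [extendLast, Equiv.permCongr_apply]

lemma extendLast_injective {n : ℕ} : Function.Injective (extendLast (n := n)) :=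
  (Equiv.permCongr _).injective.comp Equiv.optionCongr_injective

lemma exists_extendLast_eq {n : ℕ} {σ : Equiv.Perm (Fin (n + 1))}
    (hσ : σ (Fin.last n) = Fin.last n) : ∃ τ, extendLast τ = σ := by
  set σ' := finSuccEquivLast.permCongr σ
  have hnone : σ' none = none := by simp [σ', Equiv.permCongr_apply, hσ]
  have hσ' : (Equiv.removeNone σ').optionCongr = σ' := by
    have := Equiv.Perm.decomposeOption.symm_apply_apply σ'
    rwa [Equiv.Perm.decomposeOption_apply, Equiv.Perm.decomposeOption_symm_apply, hnone,
      Equiv.swap_self, ← Equiv.Perm.one_def, one_mul] at this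
  refine ⟨Equiv.removeNone σ', ?_⟩
  rw [extendLast, hσ', ← Equiv.permCongr_symm, Equiv.symm_apply_apply]

lemma isCDesB_castSucc {n : ℕ} (σ : Equiv.Perm (Fin (n + 1))) (i : Fin n) :
    isCDesB σ i.castSucc = decide (σ i.succ < σ i.castSucc) := by
  simp [isCDesB, Fin.succ]

lemma isCDesB_last {n : ℕ} (σ : Equiv.Perm (Fin (n + 1))) : isCDesB σ (Fin.last n) = false := by
  simp [isCDesB]

lemma isCDesB_extendLast_castSucc {n : ℕ} (τ : Equiv.Perm (Fin n)) (i : Fin n) :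
    isCDesB (extendLast τ) i.castSucc = isCDesB τ i := by
  cases n with
  | zero => exact i.elim0
  | succ m =>
    induction i using Fin.lastCases with
    | last =>
      rw [isCDesB_castSucc, isCDesB_last, Fin.succ_last, extendLast_last, extendLast_castSucc]
      simpa using (Fin.castSucc_lt_last _).le
    | cast k =>
      simp only [isCDesB_castSucc, Fin.succ_castSucc, extendLast_castSucc,
        Fin.castSucc_lt_castSucc_iff]

lemma cdesSet_extendLast {n : ℕ} (τ : Equiv.Perm (Fin n)) :
    cdesSet (n + 1) (extendLast τ) = cdesSet n τ := by
  ext a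
  simp [cdesSet, Fin.exists_fin_succ', isCDesB_last, isCDesB_extendLast_castSucc]

lemma apply_last_eq_last_of_succ_notMem_cdesSet {n : ℕ} {σ : Equiv.Perm (Fin (n + 1))}
    (h : n + 1 ∉ cdesSet (n + 1) σ) : σ (Fin.last n) = Fin.last n := by
  by_contra hσ
  obtain ⟨k, hk⟩ : ∃ k : Fin n, k.castSucc = σ.symm (Fin.last n) :=
    Fin.exists_castSucc_eq.mpr fun hl => hσ (σ.symm_apply_eq.mp hl).symm
  have hmax : σ k.castSucc = Fin.last n := by rw [hk, Equiv.apply_symm_apply]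
  have hdes : isCDesB σ k.castSucc = true := by
    rw [isCDesB_castSucc, hmax, decide_eq_true_iff, Fin.lt_last_iff_ne_last, ← hmax,
      σ.injective.ne_iff]
    exact Fin.castSucc_lt_succ.ne'
  exact h (mem_image.mpr ⟨k.castSucc, mem_filter.mpr ⟨mem_univ _, hdes⟩, by simp [hmax]⟩)

lemma cdes_succ_of_notMem {n : ℕ} {S : Finset ℕ} (hS : n + 1 ∉ S) :
    cdes (n + 1) S = cdes n S := by
  refine (card_nbij extendLast (fun τ hτ => ?_) extendLast_injective.injOn fun σ hσ => ?_).symm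
  · simpa [cdesSet_extendLast] using hτ
  · simp only [coe_filter, mem_univ, true_and, Set.mem_ofPred_eq] at hσ
    obtain ⟨τ, rfl⟩ := exists_extendLast_eq (apply_last_eq_last_of_succ_notMem_cdesSet (hσ ▸ hS))
    exact ⟨τ, by simpa [cdesSet_extendLast] using hσ, rfl⟩

lemma cdes_eq_of_forall_le {j : ℕ} {S : Finset ℕ} (hS : ∀ s ∈ S, s ≤ j) {n : ℕ} (hjn : j ≤ n) :
    cdes n S = cdes j S := by
  induction n, hjn using Nat.le_induction with
  | base => rfl
  | succ n hjn ih => rw [cdes_succ_of_notMem fun h => by have := hS _ h; omega, ih]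

theorem stmt_3_general (j : ℕ) (S : Finset ℕ) (hne : S.Nonempty)
    (hj : S.max' hne = j) :
    ∀ n : ℕ, j ≤ n → cdes n S = cdes j S :=
  fun _ => cdes_eq_of_forall_le fun s hs => hj ▸ S.le_max' s hs

theorem stmt_3 (j : ℕ) (S : Finset ℕ) (hne : S.Nonempty)
    (h2 : ∀ s ∈ S, 2 ≤ s) (hj : S.max' hne = j) :
    ∀ n : ℕ, j ≤ n → cdes n S = cdes j S :=
  stmt_3_general j S hne hj
end

section
/- For n ≥ 2, the number of permutations of [n] whose circular descent set is exactly {n} equals 2^{n-1} - 1. -/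
open Finset

namespace CircularDescent

variable {n : ℕ}

section Grassmannian

variable (A : Finset (Fin n))

lemma card_compl_add_card_compl_compl : #Aᶜ + #Aᶜᶜ = n := by
  rw [card_add_card_compl, Fintype.card_fin]

noncomputable def grassmannian : Equiv.Perm (Fin n) :=
  (finCongr (card_compl_add_card_compl_compl A).symm).trans
    (finSumFinEquiv.symm.trans (finSumEquivOfFinset (s := Aᶜ) rfl rfl))

lemma grassmannian_apply_of_lt (i : Fin n) (hi : (i : ℕ) < #Aᶜ) :
    grassmannian A i = Aᶜ.orderEmbOfFin rfl ⟨i, hi⟩ := by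
  change finSumEquivOfFinset _ _ (finSumFinEquiv.symm (Fin.castAdd _ ⟨i, hi⟩)) = _
  rw [finSumFinEquiv_symm_apply_castAdd]
  rfl

lemma grassmannian_apply_of_le (i : Fin n) (hi : #Aᶜ ≤ (i : ℕ)) :
    grassmannian A i = Aᶜᶜ.orderEmbOfFin rfl
      ⟨i - #Aᶜ, by have := card_compl_add_card_compl_compl A; omega⟩ := by
  have hi' : (i : ℕ) = #Aᶜ + (i - #Aᶜ) := by omega
  change finSumEquivOfFinset _ _ (finSumFinEquiv.symm
    (Fin.cast (card_compl_add_card_compl_compl A).symm i)) = _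
  rw [show Fin.cast (card_compl_add_card_compl_compl A).symm i = Fin.natAdd #Aᶜ
    ⟨i - #Aᶜ, by have := card_compl_add_card_compl_compl A; omega⟩ from Fin.ext hi',
    finSumFinEquiv_symm_apply_natAdd]
  rfl

lemma grassmannian_mem_iff (i : Fin n) : grassmannian A i ∈ A ↔ #Aᶜ ≤ (i : ℕ) := by
  rcases lt_or_ge (i : ℕ) #Aᶜ with hi | hi
  · have hmem := Aᶜ.orderEmbOfFin_mem rfl ⟨i, hi⟩
    rw [mem_compl] at hmem
    rw [grassmannian_apply_of_lt A i hi]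
    exact iff_of_false hmem (by omega)
  · have hn := card_compl_add_card_compl_compl A
    have hmem := Aᶜᶜ.orderEmbOfFin_mem rfl ⟨i - #Aᶜ, by omega⟩
    simp only [mem_compl, not_not] at hmem
    rw [grassmannian_apply_of_le A i hi]
    exact iff_of_true hmem hi

lemma isCDesB_grassmannian {i : Fin n} (hi : isCDesB (grassmannian A) i = true) :
    (i : ℕ) + 1 = #Aᶜ := by
  unfold isCDesB at hi
  split_ifs at hi with h
  rw [decide_eq_true_eq] at hi
  have hn := card_compl_add_card_compl_compl A
  by_contra hne
  rcases lt_or_ge ((i : ℕ) + 1) #Aᶜ with hlt | hge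
  · rw [grassmannian_apply_of_lt A _ hlt, grassmannian_apply_of_lt A i (by omega)] at hi
    exact hi.not_gt ((Aᶜ.orderEmbOfFin rfl).strictMono (Fin.mk_lt_mk.mpr (by simp)))
  · rw [grassmannian_apply_of_le A _ hge, grassmannian_apply_of_le A i (by omega)] at hi
    exact hi.not_gt ((Aᶜᶜ.orderEmbOfFin rfl).strictMono (Fin.mk_lt_mk.mpr (by simp; omega)))

lemma eq_grassmannian {τ : Equiv.Perm (Fin n)} {q : Fin n} (hmem : ∀ i, τ i ∈ A ↔ q < i)
    (hlow : StrictMonoOn τ (Set.Iic q)) (hhigh : StrictMonoOn τ (Set.Ioi q)) :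
    τ = grassmannian A := by
  have hn := card_compl_add_card_compl_compl A
  have hcard : #Aᶜ = q + 1 := by
    have : Aᶜ = (Iic q).map τ.toEmbedding := by
      ext v
      rw [mem_compl, mem_map_equiv, mem_Iic, ← not_lt, ← hmem, Equiv.apply_symm_apply]
    rw [this, card_map, Fin.card_Iic]
  ext i : 1
  rcases lt_or_ge (i : ℕ) #Aᶜ with hi | hi
  · rw [grassmannian_apply_of_lt A i hi]
    refine congrFun (orderEmbOfFin_unique (s := Aᶜ) rfl (f := fun j => τ ⟨j, by omega⟩)
      (fun j => ?_) ?_) ⟨i, hi⟩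
    · rw [mem_compl, hmem, not_lt, Fin.le_def]
      change (j : ℕ) ≤ q
      have := j.isLt
      omega
    · intro a b hab
      exact hlow (by rw [Set.mem_Iic, Fin.le_def]; simp only; omega)
        (by rw [Set.mem_Iic, Fin.le_def]; simp only; omega) hab
  · rw [grassmannian_apply_of_le A i hi]
    rw [← congrFun (orderEmbOfFin_unique (s := Aᶜᶜ) rfl
      (f := fun j => τ ⟨#Aᶜ + j, by omega⟩) (fun j => ?_) ?_) ⟨i - #Aᶜ, by omega⟩]
    · exact congrArg τ (Fin.ext (by simp only; omega))
    · intro a b hab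
      exact hhigh (by rw [Set.mem_Ioi, Fin.lt_def]; simp only; omega)
        (by rw [Set.mem_Ioi, Fin.lt_def]; simp only; omega) (Fin.mk_lt_mk.mpr (by omega))
    · rw [mem_compl, mem_compl, not_not, hmem, Fin.lt_def]
      simp only
      omega

end Grassmannian

lemma cdesSet_eq_singleton_iff (σ : Equiv.Perm (Fin n)) (v : Fin n) :
    cdesSet n σ = {(v : ℕ) + 1} ↔
      univ.filter (fun i => isCDesB σ i = true) = {σ.symm v} := by
  have hinj : Function.Injective fun i => (σ i : ℕ) + 1 :=
    fun i j h => σ.injective (Fin.ext (by simpa using h))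
  rw [cdesSet, ← (image_injective hinj).eq_iff, image_singleton, Equiv.apply_symm_apply]

variable {m : ℕ}

lemma isCDesB_castSucc (σ : Equiv.Perm (Fin (m + 1))) (j : Fin m) :
    isCDesB σ j.castSucc = decide (σ j.succ < σ j.castSucc) := by
  simp [isCDesB, Fin.succ]

lemma isCDesB_last (σ : Equiv.Perm (Fin (m + 1))) : isCDesB σ (Fin.last m) = false := by
  simp [isCDesB]

lemma strictMonoOn_of_isCDesB_eq_false {σ : Equiv.Perm (Fin (m + 1))} {s : Set (Fin (m + 1))}
    (hs : s.OrdConnected) (h : ∀ i ∈ s, ∀ j ∈ s, i < j → isCDesB σ i = false) :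
    StrictMonoOn σ s := by
  refine strictMonoOn_of_lt_succ hs fun i hmax hi hsucc => ?_
  have hne : i ≠ Fin.last m := by rintro rfl; exact hmax fun _ _ => Fin.le_last _
  obtain ⟨j, rfl⟩ := Fin.exists_castSucc_eq.mpr hne
  rw [Fin.orderSucc_castSucc] at hsucc ⊢
  have hdes := h _ hi _ hsucc (Fin.castSucc_lt_succ)
  rw [isCDesB_castSucc, decide_eq_false_iff_not, not_lt] at hdes
  exact hdes.lt_of_ne (σ.injective.ne Fin.castSucc_lt_succ.ne)

lemma isCDesB_symm_last (σ : Equiv.Perm (Fin (m + 1))) :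
    isCDesB σ (σ.symm (Fin.last m)) = true ↔ σ.symm (Fin.last m) ≠ Fin.last m := by
  refine ⟨fun h he => by rw [he, isCDesB_last] at h; contradiction, fun h => ?_⟩
  obtain ⟨j, hj⟩ := Fin.exists_castSucc_eq.mpr h
  have hmax : σ j.castSucc = Fin.last m := by rw [hj, Equiv.apply_symm_apply]
  rw [← hj, isCDesB_castSucc, decide_eq_true_eq, hmax]
  exact (Fin.le_last _).lt_of_ne (hmax ▸ σ.injective.ne Fin.castSucc_lt_succ.ne')

lemma cdesSet_eq_singleton_iff_descents (σ : Equiv.Perm (Fin (m + 1))) :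
    cdesSet (m + 1) σ = {m + 1} ↔ σ.symm (Fin.last m) ≠ Fin.last m ∧
      ∀ i, i ≠ σ.symm (Fin.last m) → isCDesB σ i = false := by
  have h := cdesSet_eq_singleton_iff σ (Fin.last m)
  rw [Fin.val_last] at h
  rw [h, eq_singleton_iff_unique_mem]
  simp only [mem_filter, mem_univ, true_and, isCDesB_symm_last]
  refine and_congr_right fun _ => forall_congr' fun i => ?_
  rw [← not_imp_not, Bool.not_eq_true]

def valuesAfterMax (σ : Equiv.Perm (Fin (m + 1))) : Finset (Fin (m + 1)) :=
  univ.filter fun v => σ.symm (Fin.last m) < σ.symm v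

lemma last_notMem_valuesAfterMax (σ : Equiv.Perm (Fin (m + 1))) :
    Fin.last m ∉ valuesAfterMax σ := by
  simp [valuesAfterMax]

lemma valuesAfterMax_nonempty {σ : Equiv.Perm (Fin (m + 1))}
    (hσ : cdesSet (m + 1) σ = {m + 1}) : (valuesAfterMax σ).Nonempty :=
  ⟨σ (Fin.last m), by
    simpa [valuesAfterMax] using
      Fin.lt_last_iff_ne_last.mpr ((cdesSet_eq_singleton_iff_descents σ).mp hσ).1⟩

lemma grassmannian_valuesAfterMax {σ : Equiv.Perm (Fin (m + 1))}
    (hσ : cdesSet (m + 1) σ = {m + 1}) : grassmannian (valuesAfterMax σ) = σ := by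
  obtain ⟨-, hdes⟩ := (cdesSet_eq_singleton_iff_descents σ).mp hσ
  refine (eq_grassmannian _ (q := σ.symm (Fin.last m)) (fun i => ?_) ?_ ?_).symm
  · simp [valuesAfterMax]
  · exact strictMonoOn_of_isCDesB_eq_false Set.ordConnected_Iic
      fun i _ j hj hij => hdes i (hij.trans_le hj).ne
  · exact strictMonoOn_of_isCDesB_eq_false Set.ordConnected_Ioi
      fun i hi _ _ _ => hdes i (ne_of_gt hi)

lemma grassmannian_symm_last {A : Finset (Fin (m + 1))} (hlast : Fin.last m ∉ A) :
    ((grassmannian A).symm (Fin.last m) : ℕ) + 1 = #Aᶜ := by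
  have hpos : 0 < #Aᶜ := card_pos.mpr ⟨_, mem_compl.mpr hlast⟩
  have hn := card_compl_add_card_compl_compl A
  suffices grassmannian A ⟨#Aᶜ - 1, by omega⟩ = Fin.last m by
    rw [(Equiv.symm_apply_eq _).mpr this.symm, Fin.val_mk]
    omega
  rw [grassmannian_apply_of_lt A _ (by rw [Fin.val_mk]; omega), orderEmbOfFin_last rfl hpos]
  exact le_antisymm (Fin.le_last _) (le_max' _ _ (mem_compl.mpr hlast))

lemma cdesSet_grassmannian {A : Finset (Fin (m + 1))} (hA : A.Nonempty)
    (hlast : Fin.last m ∉ A) : cdesSet (m + 1) (grassmannian A) = {m + 1} := by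
  have hpos := grassmannian_symm_last hlast
  have hn : #A + #Aᶜ = m + 1 := by rw [card_add_card_compl, Fintype.card_fin]
  have hA' := hA.card_pos
  refine (cdesSet_eq_singleton_iff_descents _).mpr ⟨fun h => ?_, fun i hi => ?_⟩
  · rw [h, Fin.val_last] at hpos
    omega
  · rw [← Bool.not_eq_true]
    intro hdes
    have := isCDesB_grassmannian A hdes
    exact hi (Fin.ext (by omega))

lemma valuesAfterMax_grassmannian {A : Finset (Fin (m + 1))} (hlast : Fin.last m ∉ A) :
    valuesAfterMax (grassmannian A) = A := by
  have hpos := grassmannian_symm_last hlast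
  ext v
  obtain ⟨i, rfl⟩ := (grassmannian A).surjective v
  rw [valuesAfterMax, mem_filter, Equiv.symm_apply_apply, grassmannian_mem_iff, Fin.lt_def]
  simp only [mem_univ, true_and]
  omega

lemma mem_erase_empty_powerset_erase_last (A : Finset (Fin (m + 1))) :
    A ∈ (univ.erase (Fin.last m)).powerset.erase ∅ ↔ A.Nonempty ∧ Fin.last m ∉ A := by
  simp [nonempty_iff_ne_empty, subset_erase]

lemma cdes_succ_singleton (m : ℕ) :
    cdes (m + 1) {m + 1} = #((univ.erase (Fin.last m)).powerset.erase ∅) := by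
  refine card_nbij' valuesAfterMax grassmannian (fun σ hσ => ?_) (fun A hA => ?_)
    (fun σ hσ => ?_) (fun A hA => ?_)
  · rw [mem_coe, mem_filter] at hσ
    rw [mem_coe, mem_erase_empty_powerset_erase_last]
    exact ⟨valuesAfterMax_nonempty hσ.2, last_notMem_valuesAfterMax σ⟩
  · rw [mem_coe, mem_erase_empty_powerset_erase_last] at hA
    rw [mem_coe, mem_filter]
    exact ⟨mem_univ _, cdesSet_grassmannian hA.1 hA.2⟩
  · exact grassmannian_valuesAfterMax (mem_filter.mp hσ).2
  · exact valuesAfterMax_grassmannian ((mem_erase_empty_powerset_erase_last A).mp hA).2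

end CircularDescent

theorem stmt_5_general (n : ℕ) : cdes n {n} = 2 ^ (n - 1) - 1 := by
  cases n with
  | zero => simp [cdes, cdesSet]
  | succ m =>
    rw [CircularDescent.cdes_succ_singleton, card_erase_of_mem (empty_mem_powerset _),
      card_powerset, card_erase_of_mem (mem_univ _), card_univ, Fintype.card_fin,
      Nat.add_sub_cancel]

theorem stmt_5 (n : ℕ) (hn : 2 ≤ n) : cdes n {n} = 2 ^ (n - 1) - 1 :=
  stmt_5_general n
end

section
/- For n ≥ 3 and S ⊆ [2,n-1], cdes_n(S ∪ {n}) = (n-1-|S|)·cdes_{n-1}(S) + Σ_{i ∈ [2,n-1]\S} cdes_{n-1}(S ∪ {i}). -/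
/-!
Inserting the largest value `n` into a permutation of `[n-1]` at any slot but the last creates
the descent top `n` and destroys exactly the descent whose top sits immediately before the slot
(if there is one); every other descent top survives. So a permutation with descent-top set `S`
yields `S ∪ {n}` from each of its `n - 1 - |S|` non-final slots that do not follow a descent,
and one with descent-top set `S ∪ {i}`, `i ∉ S`, yields it from exactly one slot: the one right
after `i`.
-/

open Equiv Finset Function

section Counting

variable {α β γ : Type*} [DecidableEq α] [DecidableEq β] [DecidableEq γ]

lemma filter_ne_apply_eq_erase {D : Finset α} {g : α → β} (hg : Injective g) (i : α) :
    D.filter (g · ≠ g i) = D.erase i := by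
  ext j
  simp [hg.ne_iff, and_comm]

/-- In the application `D` is the set of descent positions, `f` reads off their tops, and `g`
sends a position to the insertion slot right after it, the one slot whose use destroys that
descent. -/
lemma card_filter_image_filter_ne {D : Finset α} {f : α → γ} (hf : Injective f) {g : α → β}
    (hg : Injective g) {K : Finset β} (hDK : D.image g ⊆ K) (S : Finset γ) :
    #{k ∈ K | (D.filter (g · ≠ k)).image f = S} =
      (if D.image f = S then #K - #S else 0) + #{v ∈ D.image f | (D.image f).erase v = S} := by
  conv_lhs => rw [← sdiff_union_of_subset hDK]
  rw [filter_union, card_union_of_disjoint (disjoint_filter_filter sdiff_disjoint)]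
  congr 1
  · have hfree : ∀ k ∈ K \ D.image g, D.filter (g · ≠ k) = D := fun k hk =>
      filter_true_of_mem fun i hi hik => (mem_sdiff.1 hk).2 (hik ▸ mem_image_of_mem g hi)
    rw [filter_congr fun k hk => by rw [hfree k hk], filter_const]
    split_ifs with hS
    · rw [card_sdiff_of_subset hDK, card_image_of_injective _ hg, ← hS,
        card_image_of_injective _ hf]
    · rfl
  · rw [filter_image, card_image_of_injective _ hg, filter_image, card_image_of_injective _ hf]
    simp only [filter_ne_apply_eq_erase hg, image_erase hf]

lemma card_filter_erase_eq {T I : Finset γ} (hTI : T ⊆ I) (S : Finset γ) :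
    #{v ∈ T | T.erase v = S} = #{v ∈ I \ S | T = insert v S} := by
  congr 1
  ext v
  simp only [mem_filter, mem_sdiff]
  constructor
  · rintro ⟨hvT, rfl⟩
    exact ⟨⟨hTI hvT, notMem_erase v T⟩, (insert_erase hvT).symm⟩
  · rintro ⟨⟨-, hvS⟩, rfl⟩
    exact ⟨mem_insert_self v S, erase_insert hvS⟩

end Counting

section Descents

variable {n : ℕ} (σ : Perm (Fin n))

def cdesPositions : Finset (Fin n) := {i | isCDesB σ i = true}

lemma cdesSet_eq_image : cdesSet n σ = (cdesPositions σ).image (fun i => (σ i : ℕ) + 1) := rfl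

lemma isCDesB_iff (i : Fin n) :
    isCDesB σ i = true ↔ ∃ j : Fin n, (j : ℕ) = i + 1 ∧ σ j < σ i := by
  unfold isCDesB
  split_ifs with h
  · simp only [decide_eq_true_eq]
    refine ⟨fun hlt => ⟨_, rfl, hlt⟩, ?_⟩
    rintro ⟨j, hj, hlt⟩
    rwa [show j = ⟨i + 1, h⟩ from Fin.ext hj] at hlt
  · simp only [false_iff, not_exists, not_and]
    intro j hj
    omega

lemma mem_cdesSet_iff {v : ℕ} :
    v ∈ cdesSet n σ ↔ ∃ i j : Fin n, (j : ℕ) = i + 1 ∧ σ j < σ i ∧ (σ i : ℕ) + 1 = v := by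
  simp only [cdesSet_eq_image, cdesPositions, mem_image, mem_filter, mem_univ, true_and,
    isCDesB_iff]
  constructor
  · rintro ⟨i, ⟨j, hij, hlt⟩, rfl⟩
    exact ⟨i, j, hij, hlt, rfl⟩
  · rintro ⟨i, j, hij, hlt, rfl⟩
    exact ⟨i, ⟨j, hij, hlt⟩, rfl⟩

lemma cdesSet_subset_Icc : cdesSet n σ ⊆ Icc 2 n := by
  intro v hv
  obtain ⟨i, j, -, hlt, rfl⟩ := (mem_cdesSet_iff σ).1 hv
  have := (σ i).isLt
  have : (σ j : ℕ) < σ i := hlt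
  simp only [mem_Icc]
  omega

end Descents

section InsertMax

variable {m : ℕ}

def insertMax (k : Fin (m + 1)) (σ : Perm (Fin m)) : Perm (Fin (m + 1)) :=
  (finSuccEquiv' k).trans (σ.optionCongr.trans finSuccEquivLast.symm)

@[simp]
lemma insertMax_apply_self (k : Fin (m + 1)) (σ : Perm (Fin m)) :
    insertMax k σ k = Fin.last m := by
  simp [insertMax]

@[simp]
lemma insertMax_apply_succAbove (k : Fin (m + 1)) (σ : Perm (Fin m)) (j : Fin m) :
    insertMax k σ (k.succAbove j) = (σ j).castSucc := by
  simp [insertMax]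

lemma insertMax_bijective :
    Bijective fun p : Fin (m + 1) × Perm (Fin m) => insertMax p.1 p.2 := by
  rw [Fintype.bijective_iff_injective_and_card]
  refine ⟨?_, by simp [Fintype.card_perm, Nat.factorial_succ]⟩
  rintro ⟨k, σ⟩ ⟨k', σ'⟩ h
  simp only at h
  obtain rfl : k = k' := (insertMax k' σ').injective <| by
    rw [← h, insertMax_apply_self, h, insertMax_apply_self]
  have hσ : σ = σ' := by
    ext j
    have := congrArg (· (k.succAbove j)) h
    exact congrArg Fin.val (by simpa using this)
  rw [hσ]

lemma succAbove_val_eq_succAbove_add_one_iff (k : Fin (m + 1)) (i j : Fin m) :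
    (k.succAbove j : ℕ) = k.succAbove i + 1 ↔ (j : ℕ) = i + 1 ∧ (j : ℕ) ≠ k := by
  simp only [Fin.succAbove, Fin.lt_def, Fin.val_castSucc]
  split_ifs <;> simp only [Fin.val_succ, Fin.val_castSucc] <;> omega

lemma cdesSet_insertMax (k : Fin (m + 1)) (σ : Perm (Fin m)) :
    cdesSet (m + 1) (insertMax k σ) = (if k = Fin.last m then ∅ else {m + 1}) ∪
      ((cdesPositions σ).filter (·.succ ≠ k)).image (fun i => (σ i : ℕ) + 1) := by
  ext v
  simp only [mem_cdesSet_iff, mem_union, mem_image, mem_filter, cdesPositions, mem_univ,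
    true_and, isCDesB_iff]
  constructor
  · rintro ⟨p, q, hpq, hlt, rfl⟩
    rcases Fin.eq_self_or_eq_succAbove k q with hq | ⟨j, rfl⟩
    · rw [hq, insertMax_apply_self] at hlt
      exact absurd hlt (Fin.le_last _).not_gt
    rcases Fin.eq_self_or_eq_succAbove k p with hp | ⟨i, rfl⟩
    · subst p
      left
      have hk : k ≠ Fin.last m := by
        rw [Ne, Fin.ext_iff]; have := (k.succAbove j).isLt; simp only [Fin.val_last]; omega
      simp [hk]
    · right
      obtain ⟨hij, hjk⟩ := (succAbove_val_eq_succAbove_add_one_iff k i j).1 hpq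
      refine ⟨i, ⟨⟨j, hij, by simpa using hlt⟩, ?_⟩, by simp⟩
      rw [Ne, Fin.ext_iff, Fin.val_succ]
      omega
  · rintro (hv | ⟨i, ⟨⟨j, hij, hlt⟩, hik⟩, rfl⟩)
    · split_ifs at hv with hk
      · simp at hv
      rw [mem_singleton] at hv
      have hk' : (k : ℕ) + 1 < m + 1 := by
        have := Fin.val_lt_last hk; omega
      refine ⟨k, ⟨k + 1, hk'⟩, rfl, ?_, by simp [hv]⟩
      rw [insertMax_apply_self, Fin.lt_last_iff_ne_last, ← insertMax_apply_self k σ, Ne,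
        (insertMax k σ).injective.eq_iff, Fin.ext_iff]
      simp
    · refine ⟨k.succAbove i, k.succAbove j,
        (succAbove_val_eq_succAbove_add_one_iff k i j).2 ⟨hij, ?_⟩, by simpa using hlt, by simp⟩
      rw [Ne, Fin.ext_iff, Fin.val_succ] at hik
      omega

end InsertMax

lemma card_insertMax_cdesSet_eq {m : ℕ} {S : Finset ℕ} (hS : m + 1 ∉ S) (σ : Perm (Fin m)) :
    #{k | cdesSet (m + 1) (insertMax k σ) = insert (m + 1) S} =
      (if cdesSet m σ = S then m - #S else 0) + #{v ∈ Icc 2 m \ S | cdesSet m σ = insert v S} := by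
  have hf : Injective fun i => (σ i : ℕ) + 1 := fun i j h =>
    σ.injective (Fin.ext (Nat.add_right_cancel h))
  have hsucc : (cdesPositions σ).image Fin.succ ⊆ univ.erase (Fin.last m) := by
    intro k hk
    obtain ⟨i, hi, rfl⟩ := mem_image.1 hk
    obtain ⟨j, hij, -⟩ := (isCDesB_iff σ i).1 (mem_filter.1 hi).2
    rw [mem_erase, Ne, Fin.ext_iff, Fin.val_succ, Fin.val_last]
    exact ⟨by omega, mem_univ _⟩
  have hmax : ∀ k, m + 1 ∉ ((cdesPositions σ).filter (·.succ ≠ k)).image fun i => (σ i : ℕ) + 1 :=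
    fun k hm => by
      have := mem_Icc.1 (cdesSet_subset_Icc σ (image_subset_image (filter_subset _ _) hm))
      omega
  have hfilter : ({k | cdesSet (m + 1) (insertMax k σ) = insert (m + 1) S} : Finset _) =
      {k ∈ univ.erase (Fin.last m) |
        ((cdesPositions σ).filter (·.succ ≠ k)).image (fun i => (σ i : ℕ) + 1) = S} := by
    ext k
    simp only [mem_filter, mem_univ, mem_erase, true_and, and_true, cdesSet_insertMax]
    split_ifs with hk
    · simp only [hk, empty_union, Ne, not_true_eq_false, false_and, iff_false]
      exact fun h => hmax _ (by rw [h]; exact mem_insert_self _ _)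
    · simp only [← insert_eq, hk, Ne, not_false_eq_true, true_and]
      exact ⟨fun h => by rw [← erase_insert (hmax k), h, erase_insert hS], fun h => h ▸ rfl⟩
  rw [hfilter, card_filter_image_filter_ne hf (Fin.succ_injective _) hsucc, card_erase_of_mem
    (mem_univ _), card_univ, Fintype.card_fin, Nat.add_sub_cancel, ← cdesSet_eq_image,
    card_filter_erase_eq (cdesSet_subset_Icc σ)]

lemma cdes_succ_eq_sum (m : ℕ) (T : Finset ℕ) :
    cdes (m + 1) T = ∑ σ : Perm (Fin m), #{k | cdesSet (m + 1) (insertMax k σ) = T} := by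
  rw [cdes, card_filter, ← (Equiv.ofBijective _ insertMax_bijective).sum_comp,
    Fintype.sum_prod_type, sum_comm]
  simp only [card_filter, ofBijective_apply]

theorem stmt_7 (n : ℕ) (hn : 3 ≤ n) (S : Finset ℕ) (hS : S ⊆ Finset.Icc 2 (n - 1)) :
    cdes n (insert n S) =
      (n - 1 - S.card) * cdes (n - 1) S +
      ∑ i ∈ (Finset.Icc 2 (n - 1)) \ S, cdes (n - 1) (insert i S) := by
  obtain ⟨m, rfl⟩ : ∃ m, n = m + 1 := ⟨n - 1, by omega⟩
  rw [Nat.add_sub_cancel] at hS ⊢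
  have hmS : m + 1 ∉ S := fun h => by have := (mem_Icc.1 (hS h)).2; omega
  simp only [cdes_succ_eq_sum, card_insertMax_cdesSet_eq hmS, sum_add_distrib]
  congr 1
  · rw [← sum_filter, sum_const, smul_eq_mul, mul_comm, cdes]
  · simp only [cdes, card_filter]
    exact sum_comm
end

section
/- For k = 1, d_1 = n - 1: Σ_{x_1 ∈ {0,1}} (-1)^{1-x_1}(1+x_1)^{n-1} = 2^{n-1} - 1, which equals the number of permutations of [n] with circular descent set {n}. -/
/-! The circular descents of a permutation `σ` of `[m + 1]` all sit at its maximum exactly when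
`σ` lists some set `S ⊆ [m]` increasingly, then `m + 1`, then the rest of `[m]` increasingly.
Such a `σ` is the permutation sorting `[m + 1]` by the key `(block of v, v)`, with blocks
`S < {m + 1} < rest`, so there are `2 ^ m` of them. The maximum does start a circular descent
unless it comes last, which happens only for the identity; hence `2 ^ m - 1`. -/

open Finset Equiv

section

variable {m : ℕ}

def DescendsOnlyAtMax (σ : Perm (Fin (m + 1))) : Prop :=
  ∀ i : Fin m, σ i.succ < σ i.castSucc → σ i.castSucc = Fin.last m

instance : DecidablePred (DescendsOnlyAtMax (m := m)) := fun σ =>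
  inferInstanceAs <| Decidable <|
    ∀ i : Fin m, σ i.succ < σ i.castSucc → σ i.castSucc = Fin.last m

def valuesBeforeMax (σ : Perm (Fin (m + 1))) : Finset (Fin (m + 1)) :=
  {v | σ.symm v < σ.symm (Fin.last m)}

def shapeKey (S : Finset (Fin (m + 1))) (v : Fin (m + 1)) : ℕ :=
  if v = Fin.last m then 1 else if v ∈ S then 0 else 2

theorem mem_cdesSet_succ (σ : Perm (Fin (m + 1))) (a : ℕ) :
    a ∈ cdesSet (m + 1) σ ↔
      ∃ i : Fin m, σ i.succ < σ i.castSucc ∧ (σ i.castSucc : ℕ) + 1 = a := by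
  simp [cdesSet, isCDesB, Fin.exists_fin_succ', Fin.succ]

theorem cdesSet_eq_singleton_iff (σ : Perm (Fin (m + 1))) :
    cdesSet (m + 1) σ = {m + 1} ↔ DescendsOnlyAtMax σ ∧ σ (Fin.last m) ≠ Fin.last m := by
  have hdesc : (∃ i : Fin m, σ i.succ < σ i.castSucc ∧ σ i.castSucc = Fin.last m) ↔
      σ (Fin.last m) ≠ Fin.last m := by
    constructor
    · rintro ⟨i, -, hi⟩ hlast
      exact (Fin.castSucc_lt_last i).ne (σ.injective (hi.trans hlast.symm))
    · intro hlast
      obtain ⟨i, hi⟩ := Fin.exists_castSucc_eq.mpr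
        (mt (σ.symm_apply_eq.mp · |>.symm) hlast)
      have hmax : σ i.castSucc = Fin.last m := by rw [hi, Equiv.apply_symm_apply]
      refine ⟨i, hmax ▸ Fin.lt_last_iff_ne_last.mpr fun h => ?_, hmax⟩
      exact (Fin.castSucc_lt_succ (i := i)).ne (σ.injective (hmax.trans h.symm))
  rw [eq_singleton_iff_unique_mem, mem_cdesSet_succ, and_comm, DescendsOnlyAtMax, ← hdesc]
  simp [mem_cdesSet_succ, Fin.ext_iff]

theorem eq_sort_iff_strictMono_toLex {n : ℕ} {α : Type*} [LinearOrder α] {f : Fin n → α}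
    {σ : Perm (Fin n)} : σ = Tuple.sort f ↔ StrictMono fun i => toLex (f (σ i), σ i) :=
  Tuple.eq_sort_iff'

theorem DescendsOnlyAtMax.castSucc_lt_succ {σ : Perm (Fin (m + 1))} (h : DescendsOnlyAtMax σ)
    {i : Fin m} (hi : σ i.castSucc ≠ Fin.last m) : σ i.castSucc < σ i.succ :=
  lt_of_le_of_ne (not_lt.mp (mt (h i) hi))
    (σ.injective.ne (Fin.castSucc_lt_succ (i := i)).ne)

theorem mem_valuesBeforeMax {σ : Perm (Fin (m + 1))} {v : Fin (m + 1)} :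
    v ∈ valuesBeforeMax σ ↔ σ.symm v < σ.symm (Fin.last m) := by
  simp [valuesBeforeMax]

theorem shapeKey_valuesBeforeMax_apply (σ : Perm (Fin (m + 1))) (p : Fin (m + 1)) :
    shapeKey (valuesBeforeMax σ) (σ p) =
      if p = σ.symm (Fin.last m) then 1 else if p < σ.symm (Fin.last m) then 0 else 2 := by
  simp [shapeKey, mem_valuesBeforeMax, ← σ.eq_symm_apply]

theorem eq_sort_shapeKey_iff {S : Finset (Fin (m + 1))} (hS : Fin.last m ∉ S)
    (σ : Perm (Fin (m + 1))) :
    σ = Tuple.sort (shapeKey S) ↔ DescendsOnlyAtMax σ ∧ valuesBeforeMax σ = S := by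
  rw [eq_sort_iff_strictMono_toLex]
  constructor
  · intro hmono
    have hvalues : valuesBeforeMax σ = S := by
      ext v
      rw [mem_valuesBeforeMax, ← hmono.lt_iff_lt]
      by_cases hv : v = Fin.last m <;> by_cases hvS : v ∈ S <;>
        simp_all [shapeKey, Prod.Lex.toLex_lt_toLex]
    refine ⟨fun i hdesc => ?_, hvalues⟩
    subst hvalues
    have hlex := hmono (Fin.castSucc_lt_succ (i := i))
    simp only [Prod.Lex.toLex_lt_toLex, shapeKey_valuesBeforeMax_apply] at hlex
    rw [← σ.eq_symm_apply]
    set k := σ.symm (Fin.last m)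
    by_contra hne
    have hsucc : i.succ ≠ k := fun h =>
      (Fin.le_last _).not_gt (σ.eq_symm_apply.mp h ▸ hdesc)
    rw [if_neg hne, if_neg hsucc] at hlex
    rcases hlex with hkey | ⟨-, hasc⟩
    -- keys `0` then `2` would put the maximum strictly between two adjacent positions
    · split_ifs at hkey <;> simp only [Fin.lt_def, Fin.ext_iff] at * <;> grind
    · exact hdesc.not_gt hasc
  · rintro ⟨hdesc, rfl⟩
    refine Fin.strictMono_iff_lt_succ.mpr fun i => ?_
    simp only [Prod.Lex.toLex_lt_toLex, shapeKey_valuesBeforeMax_apply]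
    set k := σ.symm (Fin.last m)
    have hasc (hne : i.castSucc ≠ k) : σ i.castSucc < σ i.succ :=
      hdesc.castSucc_lt_succ fun h => hne (σ.eq_symm_apply.mpr h)
    split_ifs <;> simp only [Fin.lt_def, Fin.ext_iff] at * <;> grind

theorem card_descendsOnlyAtMax : #{σ : Perm (Fin (m + 1)) | DescendsOnlyAtMax σ} = 2 ^ m := by
  rw [card_eq_sum_card_fiberwise (f := valuesBeforeMax) (t := (univ.erase (Fin.last m)).powerset)
    fun σ _ => mem_powerset.mpr fun v hv => mem_erase.mpr
      ⟨by rintro rfl; exact lt_irrefl _ (mem_valuesBeforeMax.mp hv), mem_univ v⟩]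
  calc ∑ S ∈ (univ.erase (Fin.last m)).powerset,
        #{σ ∈ {σ | DescendsOnlyAtMax σ} | valuesBeforeMax σ = S}
      = ∑ S ∈ (univ.erase (Fin.last m)).powerset, 1 := sum_congr rfl fun S hS => by
        have hlast : Fin.last m ∉ S := fun h => by simpa using mem_powerset.mp hS h
        refine card_eq_one.mpr ⟨Tuple.sort (shapeKey S), ?_⟩
        ext σ
        simp [filter_filter, eq_sort_shapeKey_iff hlast]
    _ = 2 ^ m := by simp

theorem descendsOnlyAtMax_and_apply_last_iff (σ : Perm (Fin (m + 1))) :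
    DescendsOnlyAtMax σ ∧ σ (Fin.last m) = Fin.last m ↔ σ = 1 := by
  constructor
  · rintro ⟨hdesc, hlast⟩
    refine σ.monotone_iff.mp (Fin.strictMono_iff_lt_succ.mpr fun i => ?_).monotone
    exact hdesc.castSucc_lt_succ fun h =>
      (Fin.castSucc_lt_last i).ne (σ.injective (h.trans hlast.symm))
  · rintro rfl
    exact ⟨fun i h => absurd h (Fin.castSucc_lt_succ (i := i)).not_gt, rfl⟩

theorem card_cdesSet_eq_singleton :
    #{σ : Perm (Fin (m + 1)) | cdesSet (m + 1) σ = {m + 1}} = 2 ^ m - 1 := by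
  have h := card_filter_add_card_filter_not (s := {σ : Perm (Fin (m + 1)) | DescendsOnlyAtMax σ})
    (fun σ => σ (Fin.last m) = Fin.last m)
  simp only [filter_filter, descendsOnlyAtMax_and_apply_last_iff, card_descendsOnlyAtMax,
    ← cdesSet_eq_singleton_iff] at h
  rw [filter_eq' univ 1, if_pos (mem_univ _), card_singleton] at h
  omega

end

theorem stmt_9_general (n : ℕ) :
    (∑ x ∈ Finset.range 2, (-1 : ℤ) ^ (1 - x) * ((1 : ℤ) + (x : ℤ)) ^ (n - 1)
        = 2 ^ (n - 1) - 1) ∧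
    (cdes n {n} : ℤ) = 2 ^ (n - 1) - 1 := by
  refine ⟨by simp [Finset.sum_range_succ, sub_eq_neg_add], ?_⟩
  cases n with
  | zero => simp [cdes, cdesSet]
  | succ m =>
    rw [cdes, card_cdesSet_eq_singleton, Nat.cast_sub Nat.one_le_two_pow]
    simp

theorem stmt_9 (n : ℕ) (hn : 2 ≤ n) :
    (∑ x ∈ Finset.range 2, (-1 : ℤ) ^ (1 - x) * ((1 : ℤ) + (x : ℤ)) ^ (n - 1)
        = 2 ^ (n - 1) - 1) ∧
    (cdes n {n} : ℤ) = 2 ^ (n - 1) - 1 :=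
  stmt_9_general n
end

section
/- For a permutation σ of [n] with |σ^{-1}(i) − σ^{-1}(i−1)| ≥ 2 and i ∈ CDES(σ), i−1 ∉ CDES(σ), the permutation τ obtained by swapping the values i and i−1 in σ satisfies CDES(τ) = CDES(σ) ∪ {i−1} \ {i}. -/
open Equiv Equiv.Perm Finset

theorem Finset.image_swap_of_mem_of_notMem {α : Type*} [DecidableEq α] {s : Finset α} {a b : α}
    (ha : a ∈ s) (hb : b ∉ s) : s.image (swap a b) = (insert b s).erase a := by
  apply coe_injective
  push_cast
  exact Equiv.image_swap_of_mem_of_notMem ha hb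

theorem Fin.swap_lt_swap_iff_of_succ_eq {n : ℕ} {a b u v : Fin n} (hab : (b : ℕ) + 1 = a)
    (hne : ¬(u = a ∧ v = b)) (hne' : ¬(u = b ∧ v = a)) :
    swap a b u < swap a b v ↔ u < v := by
  rw [swap_apply_def, swap_apply_def]
  split_ifs <;> simp only [Fin.lt_def, Fin.ext_iff] at * <;> omega

namespace Equiv.Perm

variable {n : ℕ}

def cdesTops (σ : Perm (Fin n)) : Finset (Fin n) :=
  (univ.filter fun j => isCDesB σ j = true).image σ

theorem cdesSet_eq_image_cdesTops (σ : Perm (Fin n)) :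
    cdesSet n σ = (cdesTops σ).image fun v : Fin n => (v : ℕ) + 1 := by
  rw [cdesTops, image_image]
  rfl

theorem not_adjacent_of_two_le_dist {σ : Perm (Fin n)} {a b : Fin n}
    (hfar : 2 ≤ Nat.dist (σ⁻¹ a) (σ⁻¹ b)) {j k : Fin n} (hjk : (k : ℕ) = j + 1) :
    ¬(σ k = a ∧ σ j = b) := by
  rintro ⟨rfl, rfl⟩
  simp only [Nat.dist, coe_inv, symm_apply_apply, hjk] at hfar
  omega

theorem isCDesB_swap_mul {σ : Perm (Fin n)} {a b : Fin n} (hab : (b : ℕ) + 1 = a)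
    (hfar : 2 ≤ Nat.dist (σ⁻¹ a) (σ⁻¹ b)) (j : Fin n) :
    isCDesB (swap a b * σ) j = isCDesB σ j := by
  unfold isCDesB
  split_ifs with h
  · rw [decide_eq_decide, mul_apply, mul_apply]
    exact Fin.swap_lt_swap_iff_of_succ_eq hab
      (not_adjacent_of_two_le_dist hfar rfl)
      (not_adjacent_of_two_le_dist (Nat.dist_comm _ _ ▸ hfar) rfl)
  · rfl

theorem cdesTops_swap_mul {σ : Perm (Fin n)} {a b : Fin n} (hab : (b : ℕ) + 1 = a)
    (hfar : 2 ≤ Nat.dist (σ⁻¹ a) (σ⁻¹ b)) :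
    cdesTops (swap a b * σ) = (cdesTops σ).image (swap a b) := by
  simp only [cdesTops, isCDesB_swap_mul hab hfar, image_image]
  rfl

end Equiv.Perm

theorem stmt_15 (n i : ℕ) (h2 : 2 ≤ i) (hin : i ≤ n)
    (σ : Equiv.Perm (Fin n))
    (hdes : i ∈ cdesSet n σ) (hnotdes : i - 1 ∉ cdesSet n σ)
    (hfar : 2 ≤ Nat.dist (σ⁻¹ ⟨i - 1, by omega⟩ : Fin n) (σ⁻¹ ⟨i - 2, by omega⟩ : Fin n)) :
    cdesSet n (Equiv.swap (⟨i - 1, by omega⟩ : Fin n) (⟨i - 2, by omega⟩ : Fin n) * σ) =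
      insert (i - 1) ((cdesSet n σ).erase i) := by
  set a : Fin n := ⟨i - 1, by omega⟩
  set b : Fin n := ⟨i - 2, by omega⟩
  have hinj : Function.Injective fun v : Fin n => (v : ℕ) + 1 :=
    (add_left_injective 1).comp Fin.val_injective
  have ha : (a : ℕ) + 1 = i := by simp only [a]; omega
  have hb : (b : ℕ) + 1 = i - 1 := by simp only [b]; omega
  rw [cdesSet_eq_image_cdesTops, ← ha, hinj.mem_finset_image] at hdes
  rw [cdesSet_eq_image_cdesTops, ← hb, hinj.mem_finset_image] at hnotdes
  rw [cdesSet_eq_image_cdesTops, cdesTops_swap_mul (by simp only [a, b]; omega) hfar,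
    Finset.image_swap_of_mem_of_notMem hdes hnotdes, image_erase hinj, image_insert,
    ← cdesSet_eq_image_cdesTops, hb, ha, erase_insert_of_ne (by omega)]
end

section
/- For n ≥ 2, the number of permutations of [n] with circular descent set S equals the number of permutations of [n] with non-weak excedance bottom set S, for every S ⊆ [2,n]. -/
/-- The non-weak excedance bottom set of `σ`, as a set of 1-based positions. -/
def nwexbSet (n : ℕ) (σ : Equiv.Perm (Fin n)) : Finset ℕ :=
  (Finset.univ.filter (fun p : Fin n => σ p < p)).image (fun p : Fin n => ((p : ℕ) + 1))

def nwexb (n : ℕ) (S : Finset ℕ) : ℕ :=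
  (Finset.univ.filter (fun σ : Equiv.Perm (Fin n) => nwexbSet n σ = S)).card

/-!
Cut the word `w` before each of its left-to-right maxima and turn every block
`w a, w (a+1), …, w b` into the cycle `w a ↦ w (a+1) ↦ ⋯ ↦ w b ↦ w a`; this is `w` conjugating
the map on positions that steps to `i + 1` inside a block and jumps from the end of a block back
to its start. Inside a block the cycle drops at `w i` exactly when `i` is a descent; at the end
of a block it jumps up to the block maximum `w a`, and `i` is not a descent there since the next
letter is a new left-to-right maximum. So the descent tops of `w` are exactly the non-weak
excedance bottoms of the new permutation `σ`. The map `w ↦ σ` is injective because `w` is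
recovered from right to left: once `w` is known after position `j`, the set of letters at
positions `≤ j` is known, hence their maximum, hence `σ (w j)`.
-/

namespace BlockCycles

open Finset

variable {n : ℕ} (w : Equiv.Perm (Fin n))

def prefixMax (i : Fin n) : Fin n :=
  ((Iic i).image w).max' (nonempty_Iic.image w)

lemma le_prefixMax {i j : Fin n} (h : j ≤ i) : w j ≤ prefixMax w i :=
  le_max' _ _ (mem_image_of_mem w (mem_Iic.2 h))

lemma symm_prefixMax_le (i : Fin n) : w.symm (prefixMax w i) ≤ i := by
  obtain ⟨j, hj, hwj⟩ := mem_image.1 (max'_mem ((Iic i).image w) (nonempty_Iic.image w))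
  rw [prefixMax, ← hwj, Equiv.symm_apply_apply]
  exact mem_Iic.1 hj

lemma prefixMax_mono : Monotone (prefixMax w) := fun i j hij =>
  calc prefixMax w i = w (w.symm (prefixMax w i)) := (w.apply_symm_apply _).symm
    _ ≤ prefixMax w j := le_prefixMax w ((symm_prefixMax_le w i).trans hij)

lemma image_Iic_subset_of_eqOn_Ioi {w w' : Equiv.Perm (Fin n)} {j : Fin n}
    (h : Set.EqOn w w' (Set.Ioi j)) : (Iic j).image w ⊆ (Iic j).image w' := by
  intro x hx
  obtain ⟨a, ha, rfl⟩ := mem_image.1 hx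
  refine mem_image.2 ⟨w'.symm (w a), mem_Iic.2 (not_lt.1 fun hlt => ?_), w'.apply_symm_apply _⟩
  have hback : w (w'.symm (w a)) = w a := by rw [h hlt, w'.apply_symm_apply]
  rw [w.injective hback] at hlt
  exact (mem_Iic.1 ha).not_gt hlt

lemma prefixMax_congr {w w' : Equiv.Perm (Fin n)} {j : Fin n}
    (h : Set.EqOn w w' (Set.Ioi j)) : prefixMax w j = prefixMax w' j := by
  unfold prefixMax
  congr 1
  exact (image_Iic_subset_of_eqOn_Ioi h).antisymm
    (image_Iic_subset_of_eqOn_Ioi h.symm)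

def ContinuesBlock (i : Fin n) : Prop :=
  ∃ h : (i : ℕ) + 1 < n, w ⟨i + 1, h⟩ < prefixMax w i

instance (i : Fin n) : Decidable (ContinuesBlock w i) := by
  unfold ContinuesBlock
  infer_instance

def blockSucc (i : Fin n) : Fin n :=
  if h : ContinuesBlock w i then ⟨i + 1, h.1⟩ else w.symm (prefixMax w i)

lemma apply_blockSucc (i : Fin n) :
    w (blockSucc w i) = if h : ContinuesBlock w i then w ⟨i + 1, h.1⟩ else prefixMax w i := by
  unfold blockSucc
  split_ifs <;> simp

lemma prefixMax_lt_of_not_continuesBlock {i j : Fin n} (hi : ¬ ContinuesBlock w i)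
    (hij : i < j) : prefixMax w i < prefixMax w j := by
  have h1 : (i : ℕ) + 1 < n := by omega
  have hge : prefixMax w i ≤ w ⟨i + 1, h1⟩ := not_lt.1 fun hlt => hi ⟨h1, hlt⟩
  have hne : w ⟨i + 1, h1⟩ ≠ prefixMax w i := by
    intro he
    have := symm_prefixMax_le w i
    rw [← he, Equiv.symm_apply_apply] at this
    simp [Fin.le_def] at this
  calc prefixMax w i < w ⟨i + 1, h1⟩ := lt_of_le_of_ne hge hne.symm
    _ ≤ prefixMax w j := le_prefixMax w (Fin.le_def.2 (by simp only; omega))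

lemma blockSucc_ne {i j : Fin n} (hi : ContinuesBlock w i) (hj : ¬ ContinuesBlock w j) :
    blockSucc w i ≠ blockSucc w j := by
  rw [blockSucc, dif_pos hi, blockSucc, dif_neg hj]
  intro he
  have hij : i ≤ j := by
    have := symm_prefixMax_le w j
    rw [← he, Fin.le_def] at this
    exact Fin.le_def.2 (by simp only at this; omega)
  have hmax : w ⟨i + 1, hi.1⟩ = prefixMax w j := by rw [he, Equiv.apply_symm_apply]
  exact (hi.2.trans_le (prefixMax_mono w hij)).ne hmax

lemma blockSucc_injective : Function.Injective (blockSucc w) := by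
  intro i j hij
  by_cases hi : ContinuesBlock w i <;> by_cases hj : ContinuesBlock w j
  · rw [blockSucc, dif_pos hi, blockSucc, dif_pos hj, Fin.mk.injEq] at hij
    exact Fin.ext (by omega)
  · exact absurd hij (blockSucc_ne w hi hj)
  · exact absurd hij.symm (blockSucc_ne w hj hi)
  · rw [blockSucc, dif_neg hi, blockSucc, dif_neg hj] at hij
    have hmax := w.symm.injective hij
    rcases lt_trichotomy i j with h | h | h
    · exact absurd hmax (prefixMax_lt_of_not_continuesBlock w hi h).ne
    · exact h
    · exact absurd hmax.symm (prefixMax_lt_of_not_continuesBlock w hj h).ne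

noncomputable def blockSuccPerm : Equiv.Perm (Fin n) :=
  Equiv.ofBijective _ (Finite.injective_iff_bijective.1 (blockSucc_injective w))

noncomputable def blocksToCycles : Equiv.Perm (Fin n) :=
  w.symm.trans ((blockSuccPerm w).trans w)

lemma blocksToCycles_apply_apply (i : Fin n) : blocksToCycles w (w i) = w (blockSucc w i) := by
  simp [blocksToCycles, blockSuccPerm]

lemma apply_blockSucc_lt_iff (i : Fin n) : w (blockSucc w i) < w i ↔ isCDesB w i = true := by
  have hself : w i ≤ prefixMax w i := le_prefixMax w le_rfl
  rw [apply_blockSucc]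
  by_cases h1 : (i : ℕ) + 1 < n
  · by_cases h2 : w ⟨i + 1, h1⟩ < prefixMax w i
    · have hcont : ContinuesBlock w i := ⟨h1, h2⟩
      rw [dif_pos hcont]
      simp [isCDesB, h1]
    · rw [dif_neg fun h => h2 h.2]
      simp only [isCDesB, h1, dif_pos, decide_eq_true_eq]
      exact iff_of_false hself.not_gt fun h => h2 (h.trans_le hself)
  · simp [dif_neg fun h : ContinuesBlock w i => h1 h.1, isCDesB, h1, hself.not_gt]

lemma cdesSet_eq_nwexbSet : cdesSet n w = nwexbSet n (blocksToCycles w) := by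
  ext x
  simp only [cdesSet, nwexbSet, mem_image, mem_filter, mem_univ, true_and]
  conv_rhs => rw [w.surjective.exists]
  simp only [blocksToCycles_apply_apply, apply_blockSucc_lt_iff]

lemma apply_blockSucc_congr {w w' : Equiv.Perm (Fin n)} {j : Fin n}
    (h : Set.EqOn w w' (Set.Ioi j)) : w (blockSucc w j) = w' (blockSucc w' j) := by
  have hmax := prefixMax_congr h
  have hnext (h1 : (j : ℕ) + 1 < n) : w ⟨j + 1, h1⟩ = w' ⟨j + 1, h1⟩ :=
    h (Fin.lt_def.2 (Nat.lt_succ_self _))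
  have hcont : ContinuesBlock w j ↔ ContinuesBlock w' j := by
    simp only [ContinuesBlock, hnext, hmax]
  rw [apply_blockSucc, apply_blockSucc]
  split_ifs with hw hw' hw'
  · exact hnext _
  · exact absurd (hcont.1 hw) hw'
  · exact absurd (hcont.2 hw') hw
  · exact hmax

lemma blocksToCycles_injective : Function.Injective (blocksToCycles (n := n)) := by
  intro w w' he
  refine Equiv.ext fun j => ?_
  induction j using WellFoundedGT.induction with
  | _ j ih =>
    apply (blocksToCycles w).injective
    rw [blocksToCycles_apply_apply, apply_blockSucc_congr fun k hk => ih k hk, he,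
      blocksToCycles_apply_apply]

lemma blocksToCycles_bijective : Function.Bijective (blocksToCycles (n := n)) :=
  Finite.injective_iff_bijective.1 blocksToCycles_injective

end BlockCycles

open BlockCycles in
theorem stmt_17_general (n : ℕ) (S : Finset ℕ) :
    cdes n S = nwexb n S :=
  Finset.card_equiv (Equiv.ofBijective _ blocksToCycles_bijective) fun w => by
    simp [cdesSet_eq_nwexbSet]

theorem stmt_17 (n : ℕ) (hn : 2 ≤ n) (S : Finset ℕ) (hS : S ⊆ Finset.Icc 2 n) :
    cdes n S = nwexb n S :=
  stmt_17_general n S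
end

section
/- For n ≥ 2 and nonempty S = {s_1 > ... > s_k} ⊆ [2,n], cdes_n(S) ≤ Π_{i=1}^{k} (1+i)^{d_i} where d_i = s_i − s_{i+1} for i < k and d_k = s_k − 1. -/
/-!
Read `σ` off value by value, from the largest down: each value `x` is inserted into the word of
the larger values, either at the front or right after the nearest larger value to its left,
`prevLarger σ x`. That neighbour is always a descent top, so if `CDES(σ) = S` there are at most
`1 + #{t ∈ S | t > x + 1}` choices for the 0-based value `x`, and these choices determine `σ`.
Exactly `d_i` values `v ∈ [1, n]` have exactly `i` elements of `S` above them, which turns the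
product of the numbers of choices into `∏ (1 + i) ^ d_i`.
-/

open Equiv Finset

namespace Equiv.Perm

variable {n : ℕ} (σ : Perm (Fin n))

def largerBefore (x : Fin n) : Finset (Fin n) :=
  univ.filter fun p => p < σ.symm x ∧ x < σ p

def prevLarger (x : Fin n) : Option (Fin n) :=
  if h : (σ.largerBefore x).Nonempty then some (σ ((σ.largerBefore x).max' h)) else none

variable {σ}

lemma mem_largerBefore {x p : Fin n} : p ∈ σ.largerBefore x ↔ p < σ.symm x ∧ x < σ p := by
  simp [largerBefore]

lemma lt_of_prevLarger_eq_some {x y : Fin n} (h : σ.prevLarger x = some y) : x < y := by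
  unfold prevLarger at h
  split_ifs at h with hne
  cases h
  exact (mem_largerBefore.1 ((σ.largerBefore x).max'_mem hne)).2

lemma symm_lt_symm_iff_prevLarger {x b : Fin n} (hxb : x < b) :
    σ.symm b < σ.symm x ↔ ∃ y, σ.prevLarger x = some y ∧ σ.symm b ≤ σ.symm y := by
  have hmem : σ.symm b < σ.symm x → σ.symm b ∈ σ.largerBefore x := fun h =>
    mem_largerBefore.2 ⟨h, by simpa using hxb⟩
  unfold prevLarger
  split_ifs with hne
  · simp only [Option.some.injEq, exists_eq_left', symm_apply_apply]
    exact ⟨fun h => le_max' _ _ (hmem h),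
      fun h => h.trans_lt (mem_largerBefore.1 (max'_mem _ hne)).1⟩
  · simp only [false_and, exists_false, iff_false]
    exact fun h => hne ⟨_, hmem h⟩

lemma isCDesB_max'_largerBefore {x : Fin n} (h : (σ.largerBefore x).Nonempty) :
    isCDesB σ ((σ.largerBefore x).max' h) = true := by
  set p := (σ.largerBefore x).max' h
  obtain ⟨hpx, hxp⟩ := mem_largerBefore.1 (max'_mem _ h)
  have hp1 : (p : ℕ) + 1 < n := by have := (σ.symm x).isLt; rw [Fin.lt_def] at hpx; omega
  have hnext : σ ⟨p + 1, hp1⟩ ≤ x := by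
    have hle : (⟨p + 1, hp1⟩ : Fin n) ≤ σ.symm x := Fin.le_def.2 (Fin.lt_def.1 hpx)
    rcases hle.eq_or_lt with heq | hlt
    · simp [heq]
    · refine not_lt.1 fun hlt' => ?_
      have := le_max' _ _ (mem_largerBefore.2 ⟨hlt, hlt'⟩)
      exact absurd (Fin.le_def.1 this) (by simp [p])
  simp only [isCDesB, dif_pos hp1, decide_eq_true_eq]
  exact hnext.trans_lt hxp

lemma prevLarger_add_one_mem_cdesSet {x y : Fin n} (h : σ.prevLarger x = some y) :
    (y : ℕ) + 1 ∈ cdesSet n σ := by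
  unfold prevLarger at h
  split_ifs at h with hne
  cases h
  exact mem_image.2 ⟨_, mem_filter.2 ⟨mem_univ _, isCDesB_max'_largerBefore hne⟩, rfl⟩

variable {τ : Perm (Fin n)}

lemma symm_lt_symm_iff_of_trichotomy {a c : Fin n}
    (hac : a < c → (σ.symm c < σ.symm a ↔ τ.symm c < τ.symm a))
    (hca : c < a → (σ.symm a < σ.symm c ↔ τ.symm a < τ.symm c)) :
    σ.symm a < σ.symm c ↔ τ.symm a < τ.symm c := by
  rcases lt_trichotomy a c with h | rfl | h
  · rw [← not_le, ← not_le, (σ.symm.injective.ne h.ne').le_iff_lt,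
      (τ.symm.injective.ne h.ne').le_iff_lt, hac h]
  · simp
  · exact hca h

lemma symm_lt_symm_iff_of_prevLarger_eq {x b : Fin n} (hxb : x < b)
    (hx : σ.prevLarger x = τ.prevLarger x)
    (habove : ∀ a c, x < a → x < c → (σ.symm a < σ.symm c ↔ τ.symm a < τ.symm c)) :
    σ.symm b < σ.symm x ↔ τ.symm b < τ.symm x := by
  rw [symm_lt_symm_iff_prevLarger hxb, symm_lt_symm_iff_prevLarger hxb, hx]
  refine exists_congr fun y => and_congr_right fun hy => ?_
  rw [← not_lt, ← not_lt, habove y b (lt_of_prevLarger_eq_some hy) hxb]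

lemma prevLarger_injective : Function.Injective (prevLarger (n := n)) := by
  intro σ τ h
  -- Downward induction on `x`: the position of `x` relative to larger values is read off from
  -- `prevLarger x` and the relative order of the larger values.
  have hbelow : ∀ x b, x < b → (σ.symm b < σ.symm x ↔ τ.symm b < τ.symm x) := by
    intro x
    induction x using WellFoundedGT.induction with
    | _ x ih =>
      exact fun b hxb => symm_lt_symm_iff_of_prevLarger_eq hxb (congrFun h x)
        fun a c hxa hxc => symm_lt_symm_iff_of_trichotomy (ih a hxa c) (ih c hxc a)
  have hmono : StrictMono (σ.symm ∘ τ) := fun p q hpq =>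
    (symm_lt_symm_iff_of_trichotomy (hbelow (τ p) (τ q)) (hbelow (τ q) (τ p))).2 (by simpa)
  exact Equiv.ext fun p => by simpa [eq_comm] using congrArg σ (hmono.apply_eq (x := p))

end Equiv.Perm

theorem cdes_le_prod (n : ℕ) (S : Finset ℕ) :
    cdes n S ≤ ∏ x : Fin n, (1 + #{t ∈ S | (x : ℕ) + 1 < t}) := by
  let allowed (x : Fin n) : Finset (Option (Fin n)) :=
    insertNone {y : Fin n | x < y ∧ (y : ℕ) + 1 ∈ S}
  calc cdes n S ≤ #(Fintype.piFinset allowed) := by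
        refine card_le_card_of_injOn Perm.prevLarger (fun σ hσ => ?_)
          Perm.prevLarger_injective.injOn
        rw [mem_coe, Fintype.mem_piFinset]
        refine fun x => mem_insertNone.2 fun y hy => mem_filter.2 ⟨mem_univ _, ?_⟩
        exact ⟨Perm.lt_of_prevLarger_eq_some hy,
          (mem_filter.1 hσ).2 ▸ Perm.prevLarger_add_one_mem_cdesSet hy⟩
    _ ≤ ∏ x : Fin n, (1 + #{t ∈ S | (x : ℕ) + 1 < t}) := by
        rw [Fintype.card_piFinset]
        gcongr with x
        rw [card_insertNone, add_comm]
        gcongr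
        refine card_le_card_of_injOn (fun y : Fin n => (y : ℕ) + 1) (fun y hy => ?_)
          fun y _ z _ h => Fin.ext (by simpa using h)
        obtain ⟨-, hxy, hyS⟩ := mem_filter.1 hy
        exact mem_filter.2 ⟨hyS, by simpa using hxy⟩

lemma prod_one_add_eq_prod_pow_card {ι : Type*} (A : Finset ι) (c : ι → ℕ) {k : ℕ}
    (hc : ∀ a ∈ A, c a ≤ k) :
    ∏ a ∈ A, (1 + c a) = ∏ j : Fin k, (1 + ((j : ℕ) + 1)) ^ #{a ∈ A | c a = j + 1} := by
  rw [← prod_fiberwise_of_maps_to' (t := range (k + 1))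
      (fun a ha => mem_range.2 (Nat.lt_succ_of_le (hc a ha))) (fun b => 1 + b),
    prod_range_succ', Fin.prod_univ_eq_prod_range (fun j => (1 + (j + 1)) ^ #{a ∈ A | c a = j + 1})]
  simp [prod_const]

section Antitone

variable {k : ℕ} {s : Fin k → ℕ}

lemma lt_card_filter_lt_iff (hs : Antitone s) (v : ℕ) (j : Fin k) :
    (j : ℕ) < #{m | v < s m} ↔ v < s j := by
  constructor
  · intro h
    by_contra! hj
    have : #{m | v < s m} ≤ #(Iio j) := card_le_card fun m hm =>
      mem_Iio.2 (lt_of_not_ge fun hjm => ((mem_filter.1 hm).2.trans_le (hs hjm)).not_ge hj)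
    rw [Fin.card_Iio] at this
    omega
  · intro h
    have : #(Iic j) ≤ #{m | v < s m} := card_le_card fun m hm =>
      mem_filter.2 ⟨mem_univ _, h.trans_le (hs (mem_Iic.1 hm))⟩
    rw [Fin.card_Iic] at this
    omega

lemma card_filter_lt_eq_succ_iff (hs : Antitone s) (v : ℕ) (j : Fin k) :
    #{m | v < s m} = j + 1 ↔ v < s j ∧ ∀ h : (j : ℕ) + 1 < k, s ⟨j + 1, h⟩ ≤ v := by
  have hk : #{m | v < s m} ≤ k := (card_filter_le _ _).trans (card_fin k).le
  rw [← lt_card_filter_lt_iff hs v j]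
  by_cases h : (j : ℕ) + 1 < k
  · rw [forall_prop_of_true h, ← not_lt, ← lt_card_filter_lt_iff hs v ⟨j + 1, h⟩]
    dsimp only
    omega
  · simp only [h, IsEmpty.forall_iff, and_true]
    omega

lemma card_filter_card_filter_lt_eq_succ {n : ℕ} (hs : Antitone s) (hpos : ∀ i, 1 ≤ s i)
    (hle : ∀ i, s i ≤ n) (j : Fin k) :
    #{x ∈ range n | #{m | x + 1 < s m} = j + 1} =
      if h : (j : ℕ) + 1 < k then s j - s ⟨j + 1, h⟩ else s j - 1 := by
  simp only [card_filter_lt_eq_succ_iff hs]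
  have hj := hle j
  split_ifs with h
  · have hj' := hpos ⟨j + 1, h⟩
    rw [show {x ∈ range n | x + 1 < s j ∧ ∀ h, s ⟨j + 1, h⟩ ≤ x + 1} =
        Ico (s ⟨j + 1, h⟩ - 1) (s j - 1) by ext; simp [h]; omega, Nat.card_Ico]
    omega
  · rw [show {x ∈ range n | x + 1 < s j ∧ ∀ h, s ⟨j + 1, h⟩ ≤ x + 1} = range (s j - 1) by
        ext; simp [h]; omega, card_range]

end Antitone

theorem stmt_19_general (n k : ℕ)
    (s : Fin k → ℕ) (hs : StrictAnti s)
    (S : Finset ℕ) (hS : S = Finset.image s Finset.univ)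
    (hrange : ∀ i, s i ∈ Finset.Icc 2 n)
    (d : Fin k → ℕ)
    (hd : ∀ i : Fin k, d i = if h : (i : ℕ) + 1 < k then s i - s ⟨(i : ℕ) + 1, h⟩ else s i - 1) :
    cdes n S ≤ ∏ i : Fin k, (1 + ((i : ℕ) + 1)) ^ (d i) := by
  have hcard (v : ℕ) : #{t ∈ S | v < t} = #{m | v < s m} := by
    rw [hS, filter_image, card_image_of_injective _ hs.injective]
  calc cdes n S ≤ ∏ x : Fin n, (1 + #{t ∈ S | (x : ℕ) + 1 < t}) := cdes_le_prod n S
    _ = ∏ x ∈ range n, (1 + #{m | x + 1 < s m}) := by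
      simp only [hcard]
      exact Fin.prod_univ_eq_prod_range (fun x => 1 + #{m | x + 1 < s m}) n
    _ = ∏ j : Fin k, (1 + ((j : ℕ) + 1)) ^ #{x ∈ range n | #{m | x + 1 < s m} = j + 1} :=
      prod_one_add_eq_prod_pow_card _ _ fun _ _ => (card_filter_le _ _).trans (card_fin k).le
    _ = ∏ i : Fin k, (1 + ((i : ℕ) + 1)) ^ (d i) := by
      refine prod_congr rfl fun j _ => ?_
      rw [hd, card_filter_card_filter_lt_eq_succ hs.antitone
        (fun i => one_le_two.trans (mem_Icc.1 (hrange i)).1) fun i => (mem_Icc.1 (hrange i)).2]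

theorem stmt_19 (n k : ℕ) (hn : 2 ≤ n) (hk : 1 ≤ k)
    (s : Fin k → ℕ) (hs : StrictAnti s)
    (S : Finset ℕ) (hS : S = Finset.image s Finset.univ)
    (hrange : ∀ i, s i ∈ Finset.Icc 2 n)
    (d : Fin k → ℕ)
    (hd : ∀ i : Fin k, d i = if h : (i : ℕ) + 1 < k then s i - s ⟨(i : ℕ) + 1, h⟩ else s i - 1) :
    cdes n S ≤ ∏ i : Fin k, (1 + ((i : ℕ) + 1)) ^ (d i) :=
  stmt_19_general n k s hs S hS hrange d hd
end
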